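/- Let A : (A₁ →d A₀) be a 2-term complex of finite ℂ[∂]-modules, with CEnd⁰(A), CEnd¹(A), Δ and the λ-brackets on CEnd(A) as above. Then the data (𝒢₁ = CEnd¹(A) ⊕ A₁ → 𝒢₀ = CEnd⁰(A) ⊕ A₀, ρ₂, ρ₃ = 0), with differential Δ + d and ρ₂ given by {((f₀,f₁),x)_λ ((g₀,g₁),y)} = ([(f₀,f₁)_λ (g₀,g₁)], (f₀)_λ y), {((f₀,f₁),x)_λ (h,v)} = ([(f₀,f₁)_λ h], (f₁)_λ v), {(h,y)_λ ((f₀,f₁),x)} = ([h_λ (f₀,f₁)], h_λ(x)), is a strict 2-term Leib∞-conformal algebra, i.e. it satisfies conditions (i)–(ix) of the definition of a 2-term Leib∞-conformal algebra with ρ₃ = 0. -/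

import Mathlib

noncomputable section
open scoped BigOperators

namespace CE

/-- The `λ+μ` substitution sum: coefficient of `λ^m μ^n` in `F(λ, λ+μ)`. -/
def substSum {M : Type*} [AddCommMonoid M] (F : ℕ → ℕ → M) (m n : ℕ) : M :=
  ∑ j ∈ Finset.range (m + 1), ((m - j + n).choose n) • F j (m - j + n)

variable {A B : Type*}

/-- A conformal linear map `f : A → B[λ]` is encoded by its coefficients
`f x n` (of `λ^n`).  `IsCH DA DB f` says: `f` is ℂ-linear, satisfies
`f_λ(∂x) = (∂+λ) f_λ(x)`, and is polynomial in `λ` (which holds automatically for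
finite `ℂ[∂]`-modules). -/
def IsCH [AddCommGroup A] [Module ℂ A] [AddCommGroup B] [Module ℂ B]
    (DA : A →ₗ[ℂ] A) (DB : B →ₗ[ℂ] B) (f : A → ℕ → B) : Prop :=
  (∀ x y n, f (x + y) n = f x n + f y n) ∧
  (∀ (c : ℂ) x n, f (c • x) n = c • f x n) ∧
  (∀ x n, f (DA x) n = DB (f x n) + (if n = 0 then 0 else f x (n - 1))) ∧
  (∀ x, ∃ N, ∀ n, N ≤ n → f x n = 0)

/-- The action of `∂` on conformal linear maps: `(∂f)_λ = −λ f_λ`. -/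
def Dch [AddCommGroup B] (f : A → ℕ → B) : A → ℕ → B :=
  fun x n => match n with
  | 0 => 0
  | n + 1 => - f x n

/-- The coefficient of `λ^a μ^b` in `[f_λ g]_μ(x) = f_λ(g_{μ−λ}(x)) − g_{μ−λ}(f_λ(x))`,
i.e. the `λ`-bracket `[f_λ g] = f_λ g − g_{−∂−λ} f` of conformal endomorphisms,
realized on elements. -/
def cbr [AddCommGroup A] (f g : A → ℕ → A) : ℕ → A → ℕ → A :=
  fun a x b => ∑ p ∈ Finset.range (a + 1),
    (((-1 : ℤ) ^ p) * ((p + b).choose b)) •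
      (f (g x (p + b)) (a - p) - g (f x (a - p)) (p + b))

variable {A0 A1 : Type*}

/-- `[(f₀,f₁)_λ h] = (f₁)_λ h − h_{−∂−λ} f₀` for `(f₀,f₁) ∈ CEnd⁰(A)` and
`h ∈ CEnd¹(A) = CHom(A₀,A₁)`, realized on elements (coefficient of `λ^a μ^b`). -/
def cbr01 [AddCommGroup A0] [AddCommGroup A1]
    (f0 : A0 → ℕ → A0) (f1 : A1 → ℕ → A1) (h : A0 → ℕ → A1) : ℕ → A0 → ℕ → A1 :=
  fun a x b => ∑ p ∈ Finset.range (a + 1),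
    (((-1 : ℤ) ^ p) * ((p + b).choose b)) •
      (f1 (h x (p + b)) (a - p) - h (f0 x (a - p)) (p + b))

/-- `[h_λ (f₀,f₁)] = h_λ f₀ − (f₁)_{−∂−λ} h`, realized on elements. -/
def cbr10 [AddCommGroup A0] [AddCommGroup A1]
    (h : A0 → ℕ → A1) (f0 : A0 → ℕ → A0) (f1 : A1 → ℕ → A1) : ℕ → A0 → ℕ → A1 :=
  fun a x b => ∑ p ∈ Finset.range (a + 1),
    (((-1 : ℤ) ^ p) * ((p + b).choose b)) •
      (h (f0 x (p + b)) (a - p) - f1 (h x (a - p)) (p + b))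

/-- `CEnd⁰(A)` membership for a pair `(f₀, f₁)`: both components are conformal linear
maps and `d ∘ f₁ = f₀ ∘ d`. -/
def IsC0 [AddCommGroup A0] [Module ℂ A0] [AddCommGroup A1] [Module ℂ A1]
    (D0 : A0 →ₗ[ℂ] A0) (D1 : A1 →ₗ[ℂ] A1) (dd : A1 →ₗ[ℂ] A0)
    (F : (A0 → ℕ → A0) × (A1 → ℕ → A1)) : Prop :=
  IsCH D0 D0 F.1 ∧ IsCH D1 D1 F.2 ∧ ∀ v n, dd (F.2 v n) = F.1 (dd v) n

/-- `CEnd¹(A) = CHom(A₀, A₁)` membership. -/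
def IsC1 [AddCommGroup A0] [Module ℂ A0] [AddCommGroup A1] [Module ℂ A1]
    (D0 : A0 →ₗ[ℂ] A0) (D1 : A1 →ₗ[ℂ] A1) (h : A0 → ℕ → A1) : Prop :=
  IsCH D0 D1 h

/-- Finite generation of a `ℂ[∂]`-module. -/
def FinPart [AddCommGroup A] [Module ℂ A] (D : A →ₗ[ℂ] A) : Prop :=
  ∃ (n : ℕ) (g : Fin n → A), ∀ v : A,
    v ∈ Submodule.span ℂ (Set.range fun p : Fin n × ℕ => (D ^ p.2) (g p.1))

end CE

namespace CE

section
variable {A0 A1 : Type*} [AddCommGroup A0] [Module ℂ A0] [AddCommGroup A1] [Module ℂ A1]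

/-- The carrier of `𝒢₀ = CEnd⁰(A) ⊕ A₀` (membership in `CEnd⁰(A)` is imposed via
`IsC0` in the statements below). -/
abbrev G0T (A0 A1 : Type*) := ((A0 → ℕ → A0) × (A1 → ℕ → A1)) × A0

/-- The carrier of `𝒢₁ = CEnd¹(A) ⊕ A₁`. -/
abbrev G1T (A0 A1 : Type*) := (A0 → ℕ → A1) × A1

/-- `{((f₀,f₁),x)_λ ((g₀,g₁),y)} = ([(f₀,f₁)_λ (g₀,g₁)], (f₀)_λ y)`. -/
def rr00 (u v : G0T A0 A1) (n : ℕ) : G0T A0 A1 :=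
  ((cbr u.1.1 v.1.1 n, cbr u.1.2 v.1.2 n), u.1.1 v.2 n)

/-- `{((f₀,f₁),x)_λ (h,v)} = ([(f₀,f₁)_λ h], (f₁)_λ v)`. -/
def rr01 (u : G0T A0 A1) (w : G1T A0 A1) (n : ℕ) : G1T A0 A1 :=
  (cbr01 u.1.1 u.1.2 w.1 n, u.1.2 w.2 n)

/-- `{(h,y)_λ ((f₀,f₁),x)} = ([h_λ (f₀,f₁)], h_λ(x))`. -/
def rr10 (w : G1T A0 A1) (u : G0T A0 A1) (n : ℕ) : G1T A0 A1 :=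
  (cbr10 w.1 u.1.1 u.1.2 n, w.1 u.2 n)

/-- The differential `Δ + d : 𝒢₁ → 𝒢₀`, `(h, v) ↦ ((d∘h, h∘d), d v)`. -/
def dG (dd : A1 →ₗ[ℂ] A0) (w : G1T A0 A1) : G0T A0 A1 :=
  (((fun y n => dd (w.1 y n)), (fun z n => w.1 (dd z) n)), dd w.2)

/-- The action of `∂` on `𝒢₀`. -/
def DG0 (D0 : A0 →ₗ[ℂ] A0) (u : G0T A0 A1) : G0T A0 A1 :=
  ((Dch u.1.1, Dch u.1.2), D0 u.2)

/-- The action of `∂` on `𝒢₁`. -/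
def DG1 (D1 : A1 →ₗ[ℂ] A1) (w : G1T A0 A1) : G1T A0 A1 :=
  (Dch w.1, D1 w.2)

end


section AuxComb
open Finset

-- ===== pure combinatorics =====

private lemma choose_symm' (a c : ℕ) : (a + c).choose a = (a + c).choose c := by
  have h : a ≤ a + c := Nat.le_add_right a c
  have h2 := Nat.choose_symm h
  have e : a + c - a = c := by omega
  rw [e] at h2
  exact h2.symm

private lemma tri_core (p q b : ℕ) :
    (p + b).choose b * ((q + (p + b)).choose (p + b)) =
      (q + (p + b)).choose b * ((q + p).choose p) := by
  have h1 := Nat.choose_mul (n := q + (p + b)) (k := p + b) (s := b) (by omega)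
  have e1 : q + (p + b) - b = q + p := by omega
  have e2 : p + b - b = p := by omega
  rw [e1, e2] at h1
  rw [Nat.mul_comm] at h1
  exact h1

private lemma tri1 (p q b : ℕ) :
    (p + b).choose b * ((q + (p + b)).choose (p + b)) =
      (q + b).choose b * ((p + (q + b)).choose (q + b)) := by
  rw [tri_core p q b, tri_core q p b]
  have e1 : q + (p + b) = p + (q + b) := by omega
  have e2 : (q + p).choose p = (p + q).choose q := by
    rw [Nat.add_comm q p, choose_symm' p q]
  rw [e1, e2]

private lemma tri3 (p q b : ℕ) :
    (p + b).choose b * ((q + (p + b)).choose (p + b)) =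
      (q + (p + b)).choose b * ((p + q).choose p) := by
  rw [tri_core p q b, Nat.add_comm q p]

private lemma chooseswap (k t β : ℕ) (hk : k ≤ β) :
    β.choose k * ((β - k).choose t) = β.choose t * ((β - t).choose k) := by
  by_cases h : k + t ≤ β
  · have h1 : β.choose k = β.choose (β - k) := by
      rw [Nat.choose_symm hk]
    rw [h1]
    have h2 := Nat.choose_mul (n := β) (k := β - k) (s := t) (by omega)
    rw [h2]
    congr 1
    have h3 := Nat.choose_symm (n := β - t) (k := β - k - t) (by omega)
    have e : β - t - (β - k - t) = k := by omega
    rw [e] at h3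
    exact h3.symm
  · rcases le_or_gt t β with ht | ht
    · rw [Nat.choose_eq_zero_of_lt (show β - k < t by omega),
        Nat.choose_eq_zero_of_lt (show β - t < k by omega)]
      ring
    · rw [Nat.choose_eq_zero_of_lt (show β - k < t by omega),
        Nat.choose_eq_zero_of_lt (show β < t from ht)]
      ring

private lemma alt1 (β t T : ℕ) (hT : β ≤ T) :
    ∑ k ∈ range (T + 1), (-1 : ℤ) ^ k * (β.choose k) * ((β - k).choose t)
      = if t = β then 1 else 0 := by
  have hsub : range (β + 1) ⊆ range (T + 1) := by
    apply range_subset_range.2; omega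
  rw [← Finset.sum_subset hsub (by
    intro k hk hk2
    simp only [mem_range] at hk hk2
    rw [Nat.choose_eq_zero_of_lt (show β < k by omega)]
    ring)]
  have step : ∀ k ∈ range (β + 1),
      (-1 : ℤ) ^ k * (β.choose k) * ((β - k).choose t)
        = (β.choose t : ℤ) * ((-1) ^ k * ((β - t).choose k)) := by
    intro k hk
    simp only [mem_range] at hk
    have h := chooseswap k t β (by omega)
    have h2 : ((β.choose k : ℤ)) * ((β - k).choose t) = (β.choose t : ℤ) * ((β - t).choose k) := by
      exact_mod_cast h
    calc (-1 : ℤ) ^ k * (β.choose k) * ((β - k).choose t)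
        = (-1 : ℤ) ^ k * ((β.choose k : ℤ) * ((β - k).choose t)) := by ring
      _ = (-1 : ℤ) ^ k * ((β.choose t : ℤ) * ((β - t).choose k)) := by rw [h2]
      _ = (β.choose t : ℤ) * ((-1) ^ k * ((β - t).choose k)) := by ring
  rw [Finset.sum_congr rfl step, ← Finset.mul_sum]
  have hsub2 : range (β - t + 1) ⊆ range (β + 1) := by apply range_subset_range.2; omega
  rw [← Finset.sum_subset hsub2 (by
    intro k hk hk2
    simp only [mem_range] at hk hk2
    rw [Nat.choose_eq_zero_of_lt (show β - t < k by omega)]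
    ring)]
  rw [Int.alternating_sum_range_choose]
  rcases eq_or_ne t β with rfl | hne
  · simp
  · rw [if_neg hne]
    rcases le_or_gt t β with ht | ht
    · rw [if_neg (show β - t ≠ 0 by omega)]
      ring
    · rw [Nat.choose_eq_zero_of_lt ht]
      simp

private lemma clm1 (n r p : ℕ) (hp : p ≤ n + r) :
    ∑ k ∈ range (r + 1), (-1 : ℤ) ^ k * ((n + r - k).choose n) * ((n + r - p).choose k)
      = (p.choose r : ℤ) := by
  have hsub : range (r + 1) ⊆ range (n + r + 1) := by apply range_subset_range.2; omega
  rw [Finset.sum_subset hsub (by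
    intro k hk hk2
    simp only [mem_range] at hk hk2
    rw [Nat.choose_eq_zero_of_lt (show n + r - k < n by omega)]
    ring)]
  set β := n + r - p with hβ
  have step : ∀ k ∈ range (n + r + 1),
      (-1 : ℤ) ^ k * ((n + r - k).choose n) * (β.choose k)
        = ∑ i ∈ range (n + 1),
            (p.choose i : ℤ) * ((-1) ^ k * (β.choose k) * ((β - k).choose (n - i))) := by
    intro k hk
    simp only [mem_range] at hk
    by_cases hkβ : k ≤ β
    · have e : n + r - k = p + (β - k) := by omega
      rw [e, Nat.add_choose_eq, Finset.Nat.sum_antidiagonal_eq_sum_range_succ_mk]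
      push_cast
      rw [Finset.mul_sum, Finset.sum_mul]
      apply Finset.sum_congr rfl
      intro i _
      ring
    · rw [Nat.choose_eq_zero_of_lt (show β < k by omega)]
      simp
  rw [Finset.sum_congr rfl step, Finset.sum_comm]
  have inner : ∀ i ∈ range (n + 1),
      ∑ k ∈ range (n + r + 1),
          (p.choose i : ℤ) * ((-1) ^ k * (β.choose k) * ((β - k).choose (n - i)))
        = (p.choose i : ℤ) * (if n - i = β then 1 else 0) := by
    intro i _
    rw [← Finset.mul_sum, alt1 β (n - i) (n + r) (by omega)]
  rw [Finset.sum_congr rfl inner]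
  by_cases hβn : β ≤ n
  · have step2 : ∀ i ∈ range (n + 1),
        (p.choose i : ℤ) * (if n - i = β then 1 else 0)
          = if i = n - β then (p.choose i : ℤ) else 0 := by
      intro i hi
      simp only [mem_range] at hi
      by_cases h : n - i = β
      · rw [if_pos h, if_pos (by omega), mul_one]
      · rw [if_neg h, if_neg (by omega), mul_zero]
    rw [Finset.sum_congr rfl step2, Finset.sum_ite_eq' (range (n + 1)) (n - β)]
    rw [if_pos (by simp only [mem_range]; omega)]
    have hr : r ≤ p := by omega
    have e : n - β = p - r := by omega
    rw [e]
    rw [show p.choose (p - r) = p.choose r from Nat.choose_symm hr]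
  · have step2 : ∀ i ∈ range (n + 1),
        (p.choose i : ℤ) * (if n - i = β then 1 else 0) = 0 := by
      intro i hi
      simp only [mem_range] at hi
      rw [if_neg (by omega), mul_zero]
    rw [Finset.sum_congr rfl step2, Finset.sum_const, smul_zero]
    rw [Nat.choose_eq_zero_of_lt (show p < r by omega)]
    simp

private lemma sig_ext {x y : (_ : ℕ) × ℕ} (h1 : x.1 = y.1) (h2 : x.2 = y.2) : x = y := by
  obtain ⟨a, b⟩ := x; obtain ⟨c, d⟩ := y
  simp only at h1 h2
  cases h1; cases h2; rfl

private lemma sig3_ext {x y : Σ _ : Σ _ : ℕ, ℕ, ℕ}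
    (h1 : x.1.1 = y.1.1) (h2 : x.1.2 = y.1.2) (h3 : x.2 = y.2) : x = y := by
  obtain ⟨⟨a, b⟩, c⟩ := x; obtain ⟨⟨d, e⟩, f⟩ := y
  simp only at h1 h2 h3
  cases h1; cases h2; cases h3; rfl

private lemma cast_mul_eq {a b c d : ℕ} (h : a * b = c * d) (s : ℤ) :
    s * (a : ℤ) * (b : ℤ) = s * (c : ℤ) * (d : ℤ) := by
  have h2 : ((a : ℤ)) * b = (c : ℤ) * d := by exact_mod_cast h
  calc s * (a : ℤ) * b = s * ((a : ℤ) * b) := by ring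
    _ = s * ((c : ℤ) * d) := by rw [h2]
    _ = s * (c : ℤ) * d := by ring

-- ===== abstract sums =====
section AbstractSums
variable {M : Type*} [AddCommGroup M]

private def DD (T : ℕ → ℕ → ℕ → M) (m n b : ℕ) : M :=
  ∑ p ∈ range (m + 1), ∑ q ∈ range (n + 1),
    ((-1 : ℤ) ^ (p + q) * ((p + b).choose b) * ((q + (p + b)).choose (p + b))) •
      T (m - p) (n - q) (q + (p + b))

private def NFF (T : ℕ → ℕ → ℕ → M) (m n b : ℕ) : M :=
  ∑ α ∈ range (m + 1), ∑ p ∈ range ((m + n - α) + 1),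
    ((-1 : ℤ) ^ p * ((p + b).choose b) * (p.choose (m - α))) •
      T α (m + n - α - p) (p + b)

private def TTs (T : ℕ → ℕ → ℕ → M) (m n b : ℕ) : M :=
  ∑ j ∈ range (m + 1), ∑ p ∈ range ((m - j + n) + 1), ∑ q ∈ range (j + 1),
    (((m - j + n).choose n : ℤ) *
      ((-1 : ℤ) ^ (p + q) * ((p + b).choose b) *
        ((q + ((m - j + n) - p)).choose ((m - j + n) - p)))) •
      T (j - q) (q + ((m - j + n) - p)) (p + b)

private lemma DD_pw (T : ℕ → ℕ → ℕ → M) (m n b : ℕ) :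
    DD (fun a c e => T a e c) m n b = DD (fun a c e => T c e a) n m b := by
  unfold DD
  rw [Finset.sum_comm]
  apply Finset.sum_congr rfl
  intro q _
  apply Finset.sum_congr rfl
  intro p _
  dsimp only
  have e1 : q + (p + b) = p + (q + b) := by omega
  have ec : ((-1 : ℤ) ^ (p + q) * ((p + b).choose b) * ((q + (p + b)).choose (p + b)))
      = ((-1 : ℤ) ^ (q + p) * ((q + b).choose b) * ((p + (q + b)).choose (q + b))) := by
    rw [Nat.add_comm q p]
    exact cast_mul_eq (tri1 p q b) _
  rw [ec, e1]

private lemma DD_eq_NFF (T : ℕ → ℕ → ℕ → M) (m n b : ℕ) :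
    DD T m n b = NFF T m n b := by
  unfold DD NFF
  rw [Finset.sum_sigma', Finset.sum_sigma']
  rw [← Finset.sum_subset
    (Finset.filter_subset (fun x : Σ _ : ℕ, ℕ => m ≤ x.1 + x.2)
      ((range (m + 1)).sigma fun α => range (m + n - α + 1)))
    (by
      intro x hx hx2
      simp only [mem_filter, mem_sigma, mem_range] at hx hx2
      rw [Nat.choose_eq_zero_of_lt (show x.2 < m - x.1 by omega)]
      simp)]
  refine Finset.sum_nbij' (i := fun x : Σ _ : ℕ, ℕ => (⟨m - x.1, x.1 + x.2⟩ : Σ _ : ℕ, ℕ))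
    (j := fun x : Σ _ : ℕ, ℕ => (⟨m - x.1, x.2 - (m - x.1)⟩ : Σ _ : ℕ, ℕ))
    ?_ ?_ ?_ ?_ ?_
  · intro x hx
    simp only [mem_sigma, mem_range, mem_filter] at hx ⊢
    omega
  · intro x hx
    simp only [mem_filter, mem_sigma, mem_range] at hx ⊢
    omega
  · intro x hx
    simp only [mem_sigma, mem_range] at hx
    apply sig_ext <;> (try simp only) <;> omega
  · intro x hx
    simp only [mem_filter, mem_sigma, mem_range] at hx
    apply sig_ext <;> (try simp only) <;> omega
  · intro x hx
    obtain ⟨p, q⟩ := x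
    simp only [mem_sigma, mem_range] at hx
    dsimp only
    have e1 : m - (m - p) = p := by omega
    have e2 : m + n - (m - p) - (p + q) = n - q := by omega
    have e3 : (p + q) + b = q + (p + b) := by omega
    rw [e1, e2, e3]
    congr 1
    exact cast_mul_eq (tri3 p q b) ((-1 : ℤ) ^ (p + q))

private lemma NFF_swap (T : ℕ → ℕ → ℕ → M) (m n b : ℕ) :
    NFF T m n b = NFF (fun a c e => T c a e) n m b := by
  unfold NFF
  rw [Finset.sum_sigma', Finset.sum_sigma']
  rw [← Finset.sum_subset
    (Finset.filter_subset (fun x : Σ _ : ℕ, ℕ => m ≤ x.1 + x.2)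
      ((range (m + 1)).sigma fun α => range (m + n - α + 1)))
    (by
      intro x hx hx2
      simp only [mem_filter, mem_sigma, mem_range] at hx hx2
      rw [Nat.choose_eq_zero_of_lt (show x.2 < m - x.1 by omega)]
      simp)]
  rw [← Finset.sum_subset
    (Finset.filter_subset (fun x : Σ _ : ℕ, ℕ => n ≤ x.1 + x.2)
      ((range (n + 1)).sigma fun α => range (n + m - α + 1)))
    (by
      intro x hx hx2
      simp only [mem_filter, mem_sigma, mem_range] at hx hx2
      rw [Nat.choose_eq_zero_of_lt (show x.2 < n - x.1 by omega)]
      simp)]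
  refine Finset.sum_nbij' (i := fun x : Σ _ : ℕ, ℕ => (⟨m + n - x.1 - x.2, x.2⟩ : Σ _ : ℕ, ℕ))
    (j := fun x : Σ _ : ℕ, ℕ => (⟨m + n - x.1 - x.2, x.2⟩ : Σ _ : ℕ, ℕ))
    ?_ ?_ ?_ ?_ ?_
  · intro x hx
    simp only [mem_filter, mem_sigma, mem_range] at hx ⊢
    omega
  · intro x hx
    simp only [mem_filter, mem_sigma, mem_range] at hx ⊢
    omega
  · intro x hx
    simp only [mem_filter, mem_sigma, mem_range] at hx
    apply sig_ext <;> (try simp only) <;> (try rfl) <;> omega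
  · intro x hx
    simp only [mem_filter, mem_sigma, mem_range] at hx
    apply sig_ext <;> (try simp only) <;> (try rfl) <;> omega
  · intro x hx
    obtain ⟨α, p⟩ := x
    simp only [mem_filter, mem_sigma, mem_range] at hx
    dsimp only
    have e1 : n + m - (m + n - α - p) - p = α := by omega
    rw [e1]
    congr 2
    have e2 : n - (m + n - α - p) = p - (m - α) := by omega
    rw [e2]
    rw [Nat.choose_symm (show m - α ≤ p by omega)]

private lemma TT_eq_NFF (T : ℕ → ℕ → ℕ → M) (m n b : ℕ) :
    TTs T m n b = NFF T m n b := by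
  have stage1 : TTs T m n b
      = ∑ j ∈ range (m + 1), ∑ p ∈ range ((m - j + n) + 1), ∑ q ∈ range (j + 1),
          (((m - j + n).choose n : ℤ) *
            ((-1 : ℤ) ^ (p + (j - q)) * ((p + b).choose b) *
              (((j - q) + ((m - j + n) - p)).choose ((m - j + n) - p)))) •
            T q ((j - q) + ((m - j + n) - p)) (p + b) := by
    unfold TTs
    apply Finset.sum_congr rfl; intro j hj
    apply Finset.sum_congr rfl; intro p hp
    rw [← Finset.sum_range_reflect]
    apply Finset.sum_congr rfl; intro q hq
    simp only [mem_range] at hj hp hq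
    have e1 : j + 1 - 1 - q = j - q := by omega
    have e2 : j - (j - q) = q := by omega
    rw [e1, e2]
  rw [stage1]
  have stage2 : (∑ j ∈ range (m + 1), ∑ p ∈ range ((m - j + n) + 1), ∑ q ∈ range (j + 1),
          (((m - j + n).choose n : ℤ) *
            ((-1 : ℤ) ^ (p + (j - q)) * ((p + b).choose b) *
              (((j - q) + ((m - j + n) - p)).choose ((m - j + n) - p)))) •
            T q ((j - q) + ((m - j + n) - p)) (p + b))
      = ∑ α ∈ range (m + 1), ∑ p ∈ range ((m + n - α) + 1),
          ∑ j ∈ Icc α (min m (m + n - p)),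
          (((m - j + n).choose n : ℤ) *
            ((-1 : ℤ) ^ (p + (j - α)) * ((p + b).choose b) *
              (((j - α) + ((m - j + n) - p)).choose ((m - j + n) - p)))) •
            T α ((j - α) + ((m - j + n) - p)) (p + b) := by
    rw [Finset.sum_sigma', Finset.sum_sigma', Finset.sum_sigma', Finset.sum_sigma']
    refine Finset.sum_nbij'
      (i := fun x : Σ _ : Σ _ : ℕ, ℕ, ℕ => (⟨⟨x.2, x.1.2⟩, x.1.1⟩ : Σ _ : Σ _ : ℕ, ℕ, ℕ))
      (j := fun x : Σ _ : Σ _ : ℕ, ℕ, ℕ => (⟨⟨x.2, x.1.2⟩, x.1.1⟩ : Σ _ : Σ _ : ℕ, ℕ, ℕ))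
      ?_ ?_ ?_ ?_ ?_
    · intro x hx
      simp only [mem_sigma, mem_range, mem_Icc] at hx ⊢
      omega
    · intro x hx
      simp only [mem_sigma, mem_range, mem_Icc] at hx ⊢
      omega
    · intro x _; apply sig3_ext <;> rfl
    · intro x _; apply sig3_ext <;> rfl
    · intro x _; rfl
  rw [stage2]
  unfold NFF
  apply Finset.sum_congr rfl; intro α hα
  apply Finset.sum_congr rfl; intro p hp
  simp only [mem_range] at hα hp
  have key : ∀ j ∈ Icc α (min m (m + n - p)),
      (((m - j + n).choose n : ℤ) *
            ((-1 : ℤ) ^ (p + (j - α)) * ((p + b).choose b) *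
              (((j - α) + ((m - j + n) - p)).choose ((m - j + n) - p)))) •
            T α ((j - α) + ((m - j + n) - p)) (p + b)
        = (((-1 : ℤ) ^ p * ((p + b).choose b)) *
            ((-1 : ℤ) ^ (j - α) * ((n + (m - α) - (j - α)).choose n) *
              ((n + (m - α) - p).choose (j - α)))) •
            T α (m + n - α - p) (p + b) := by
    intro j hj
    simp only [mem_Icc, le_min_iff] at hj
    have e1 : (j - α) + ((m - j + n) - p) = m + n - α - p := by omega
    have e3 : (m + n - α - p).choose ((m - j + n) - p)
        = (n + (m - α) - p).choose (j - α) := by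
      have e4 : (m - j + n) - p = (n + (m - α) - p) - (j - α) := by omega
      have e5 : m + n - α - p = n + (m - α) - p := by omega
      rw [e4, e5, Nat.choose_symm (by omega)]
    have e2 : m - j + n = n + (m - α) - (j - α) := by omega
    rw [e1, e3, e2]
    congr 1
    rw [pow_add]
    ring
  rw [Finset.sum_congr rfl key, ← Finset.sum_smul]
  congr 1
  rw [← Finset.mul_sum]
  have ric : Icc α (min m (m + n - p)) = Ico α (min m (m + n - p) + 1) := by
    rw [Finset.Ico_add_one_right_eq_Icc]
  rw [ric, Finset.sum_Ico_eq_sum_range]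
  have key2 : ∀ k ∈ range (min m (m + n - p) + 1 - α),
      ((-1 : ℤ) ^ (α + k - α) * ((n + (m - α) - (α + k - α)).choose n) *
        ((n + (m - α) - p).choose (α + k - α)))
        = ((-1 : ℤ) ^ k * ((n + (m - α) - k).choose n) * ((n + (m - α) - p).choose k)) := by
    intro k _
    have e : α + k - α = k := by omega
    rw [e]
  rw [Finset.sum_congr rfl key2]
  have hsub : range (min m (m + n - p) + 1 - α) ⊆ range ((m - α) + 1) := by
    apply range_subset_range.2; omega
  rw [Finset.sum_subset hsub (by
    intro k hk hk2
    simp only [mem_range] at hk hk2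
    rw [Nat.choose_eq_zero_of_lt (show n + (m - α) - p < k by omega)]
    ring)]
  rw [clm1 n (m - α) p (by omega)]

private lemma SUBcore (R : ℕ → ℕ → M) (m n : ℕ) :
    ∑ j ∈ range (m + 1), ((m - j + n).choose n) •
      (∑ p ∈ range (j + 1),
        ((-1 : ℤ) ^ p * ((p + (m - j + n)).choose (m - j + n))) • R (j - p) (p + (m - j + n)))
      = R m n := by
  have stage1 : ∀ j ∈ range (m + 1),
      ((m - j + n).choose n) •
        (∑ p ∈ range (j + 1),
          ((-1 : ℤ) ^ p * ((p + (m - j + n)).choose (m - j + n))) • R (j - p) (p + (m - j + n)))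
      = ∑ p ∈ range (j + 1),
          (((m - j + n).choose n : ℤ) *
            ((-1 : ℤ) ^ (j - p) * ((m - p + n).choose (m - j + n)))) • R p (m - p + n) := by
    intro j hj
    simp only [mem_range] at hj
    rw [← Finset.sum_range_reflect]
    rw [Finset.smul_sum]
    apply Finset.sum_congr rfl; intro p hp
    simp only [mem_range] at hp
    have e1 : j + 1 - 1 - p = j - p := by omega
    have e2 : j - (j - p) = p := by omega
    have e3 : (j - p) + (m - j + n) = m - p + n := by omega
    rw [e1, e2, e3, ← natCast_zsmul, smul_smul]
  rw [Finset.sum_congr rfl stage1]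
  have stage2 : (∑ j ∈ range (m + 1), ∑ p ∈ range (j + 1),
        (((m - j + n).choose n : ℤ) *
          ((-1 : ℤ) ^ (j - p) * ((m - p + n).choose (m - j + n)))) • R p (m - p + n))
      = ∑ p ∈ range (m + 1), ∑ j ∈ Icc p m,
        (((m - j + n).choose n : ℤ) *
          ((-1 : ℤ) ^ (j - p) * ((m - p + n).choose (m - j + n)))) • R p (m - p + n) := by
    rw [Finset.sum_sigma', Finset.sum_sigma']
    refine Finset.sum_nbij'
      (i := fun x : (_ : ℕ) × ℕ => (⟨x.2, x.1⟩ : (_ : ℕ) × ℕ))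
      (j := fun x : (_ : ℕ) × ℕ => (⟨x.2, x.1⟩ : (_ : ℕ) × ℕ))
      ?_ ?_ ?_ ?_ ?_
    · intro x hx
      simp only [mem_sigma, mem_range, mem_Icc] at hx ⊢
      omega
    · intro x hx
      simp only [mem_sigma, mem_range, mem_Icc] at hx ⊢
      omega
    · intro x _; apply sig_ext <;> rfl
    · intro x _; apply sig_ext <;> rfl
    · intro x _; rfl
  rw [stage2]
  have stage3 : ∀ p ∈ range (m + 1),
      (∑ j ∈ Icc p m,
        (((m - j + n).choose n : ℤ) *
          ((-1 : ℤ) ^ (j - p) * ((m - p + n).choose (m - j + n)))) • R p (m - p + n))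
      = ((0 : ℕ).choose (m - p) : ℤ) • R p (m - p + n) := by
    intro p hp
    simp only [mem_range] at hp
    rw [← Finset.sum_smul]
    congr 1
    rw [← Finset.Ico_add_one_right_eq_Icc, Finset.sum_Ico_eq_sum_range]
    have key : ∀ k ∈ range (m + 1 - p),
        (((m - (p + k) + n).choose n : ℤ) *
          ((-1 : ℤ) ^ ((p + k) - p) * ((m - p + n).choose (m - (p + k) + n))))
        = (-1 : ℤ) ^ k * ((n + (m - p) - k).choose n) * ((n + (m - p) - 0).choose k) := by
      intro k hk
      simp only [mem_range] at hk
      have e1 : (p + k) - p = k := by omega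
      have e3 : (m - p + n).choose (m - (p + k) + n) = (n + (m - p) - 0).choose k := by
        have e4 : m - (p + k) + n = (n + (m - p) - 0) - k := by omega
        have e5 : m - p + n = n + (m - p) - 0 := by omega
        rw [e4, e5, Nat.choose_symm (by omega)]
      have e2 : m - (p + k) + n = n + (m - p) - k := by omega
      rw [e1, e3, e2]
      ring
    rw [Finset.sum_congr rfl key]
    have er : m + 1 - p = (m - p) + 1 := by omega
    rw [er, clm1 n (m - p) 0 (by omega)]
  rw [Finset.sum_congr rfl stage3]
  have stage4 : ∀ p ∈ range (m + 1),
      (((0 : ℕ).choose (m - p) : ℤ) • R p (m - p + n))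
        = if p = m then ((1 : ℤ) • R p (m - p + n)) else 0 := by
    intro p hp
    simp only [mem_range] at hp
    by_cases h : p = m
    · subst h
      rw [if_pos rfl]
      norm_num
    · rw [if_neg h, Nat.choose_eq_zero_of_lt (show 0 < m - p by omega)]
      simp
  rw [Finset.sum_congr rfl stage4, Finset.sum_ite_eq' (range (m + 1)) m]
  rw [if_pos (by simp only [mem_range]; omega), one_smul]
  congr 1
  omega

private lemma DD_eq_TT (T : ℕ → ℕ → ℕ → M) (m n b : ℕ) : DD T m n b = TTs T m n b := by
  rw [DD_eq_NFF, TT_eq_NFF]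

private lemma TT_swap_DD (T : ℕ → ℕ → ℕ → M) (m n b : ℕ) :
    TTs (fun a c e => T c a e) m n b = DD T n m b := by
  rw [TT_eq_NFF, NFF_swap, DD_eq_NFF]

private lemma DD_sub (A B : ℕ → ℕ → ℕ → M) (m n b : ℕ) :
    DD (fun a c e => A a c e - B a c e) m n b = DD A m n b - DD B m n b := by
  unfold DD
  rw [← Finset.sum_sub_distrib]
  apply Finset.sum_congr rfl; intro p _
  rw [← Finset.sum_sub_distrib]
  apply Finset.sum_congr rfl; intro q _
  rw [← smul_sub]

private lemma DD_add (A B : ℕ → ℕ → ℕ → M) (m n b : ℕ) :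
    DD (fun a c e => A a c e + B a c e) m n b = DD A m n b + DD B m n b := by
  unfold DD
  rw [← Finset.sum_add_distrib]
  apply Finset.sum_congr rfl; intro p _
  rw [← Finset.sum_add_distrib]
  apply Finset.sum_congr rfl; intro q _
  rw [← smul_add]

private lemma TT_sub (A B : ℕ → ℕ → ℕ → M) (m n b : ℕ) :
    TTs (fun a c e => A a c e - B a c e) m n b = TTs A m n b - TTs B m n b := by
  unfold TTs
  rw [← Finset.sum_sub_distrib]
  apply Finset.sum_congr rfl; intro j _
  rw [← Finset.sum_sub_distrib]
  apply Finset.sum_congr rfl; intro p _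
  rw [← Finset.sum_sub_distrib]
  apply Finset.sum_congr rfl; intro q _
  rw [← smul_sub]

private lemma TT_add (A B : ℕ → ℕ → ℕ → M) (m n b : ℕ) :
    TTs (fun a c e => A a c e + B a c e) m n b = TTs A m n b + TTs B m n b := by
  unfold TTs
  rw [← Finset.sum_add_distrib]
  apply Finset.sum_congr rfl; intro j _
  rw [← Finset.sum_add_distrib]
  apply Finset.sum_congr rfl; intro p _
  rw [← Finset.sum_add_distrib]
  apply Finset.sum_congr rfl; intro q _
  rw [← smul_add]

private lemma JACcore (S1 S2 S3 S4 S5 S6 : ℕ → ℕ → ℕ → M) (m n b : ℕ) :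
    DD (fun a c e => S1 a c e - S2 a e c - S4 c e a + S6 e c a) m n b
      = TTs (fun a c e => S1 a c e - S3 c a e - S5 e a c + S6 e c a) m n b
        + DD (fun a c e => S3 a c e - S4 a e c - S2 c e a + S5 e c a) n m b := by
  have l1 : DD (fun a c e => S1 a c e - S2 a e c - S4 c e a + S6 e c a) m n b
      = DD S1 m n b - DD (fun a c e => S2 a e c) m n b - DD (fun a c e => S4 c e a) m n b
        + DD (fun a c e => S6 e c a) m n b := by
    rw [DD_add (fun a c e => S1 a c e - S2 a e c - S4 c e a) (fun a c e => S6 e c a),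
      DD_sub (fun a c e => S1 a c e - S2 a e c) (fun a c e => S4 c e a),
      DD_sub (fun a c e => S1 a c e) (fun a c e => S2 a e c)]
  have l2 : TTs (fun a c e => S1 a c e - S3 c a e - S5 e a c + S6 e c a) m n b
      = TTs S1 m n b - TTs (fun a c e => S3 c a e) m n b - TTs (fun a c e => S5 e a c) m n b
        + TTs (fun a c e => S6 e c a) m n b := by
    rw [TT_add (fun a c e => S1 a c e - S3 c a e - S5 e a c) (fun a c e => S6 e c a),
      TT_sub (fun a c e => S1 a c e - S3 c a e) (fun a c e => S5 e a c),
      TT_sub (fun a c e => S1 a c e) (fun a c e => S3 c a e)]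
  have l3 : DD (fun a c e => S3 a c e - S4 a e c - S2 c e a + S5 e c a) n m b
      = DD S3 n m b - DD (fun a c e => S4 a e c) n m b - DD (fun a c e => S2 c e a) n m b
        + DD (fun a c e => S5 e c a) n m b := by
    rw [DD_add (fun a c e => S3 a c e - S4 a e c - S2 c e a) (fun a c e => S5 e c a),
      DD_sub (fun a c e => S3 a c e - S4 a e c) (fun a c e => S2 c e a),
      DD_sub (fun a c e => S3 a c e) (fun a c e => S4 a e c)]
  rw [l1, l2, l3]
  have e1 : DD S1 m n b = TTs S1 m n b := DD_eq_TT S1 m n b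
  have e6 : DD (fun a c e => S6 e c a) m n b = TTs (fun a c e => S6 e c a) m n b :=
    DD_eq_TT _ m n b
  have e2 : DD (fun a c e => S2 a e c) m n b = DD (fun a c e => S2 c e a) n m b :=
    DD_pw S2 m n b
  have e4 : DD (fun a c e => S4 c e a) m n b = DD (fun a c e => S4 a e c) n m b :=
    (DD_pw S4 n m b).symm
  have e3 : TTs (fun a c e => S3 c a e) m n b = DD S3 n m b := TT_swap_DD S3 m n b
  have e5 : TTs (fun a c e => S5 e a c) m n b = DD (fun a c e => S5 e c a) n m b :=
    TT_swap_DD (fun a c e => S5 e c a) m n b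
  rw [e1, e6, e2, e4, ← e3, ← e5]
  abel

private lemma SUBfull (R : ℕ → ℕ → M) (m n : ℕ) :
    substSum (fun j s => ∑ p ∈ range (j + 1),
        ((-1 : ℤ) ^ p * ((p + s).choose s)) • R (j - p) (p + s)) m n = R m n := by
  unfold substSum
  exact SUBcore R m n

private lemma genA (P Q : ℕ → ℕ → M) (m n : ℕ) :
    P m n = (∑ j ∈ range (m + 1), ((m - j + n).choose n) •
        (∑ p ∈ range (j + 1),
          ((-1 : ℤ) ^ p * ((p + (m - j + n)).choose (m - j + n))) •
            (P (j - p) (p + (m - j + n)) - Q (j - p) (p + (m - j + n)))))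
      + Q m n := by
  have SUBP := SUBcore P m n
  have SUBQ := SUBcore Q m n
  have key : ∀ j ∈ range (m + 1),
      ((m - j + n).choose n) •
        (∑ p ∈ range (j + 1),
          ((-1 : ℤ) ^ p * ((p + (m - j + n)).choose (m - j + n))) •
            (P (j - p) (p + (m - j + n)) - Q (j - p) (p + (m - j + n))))
      = ((m - j + n).choose n) •
          (∑ p ∈ range (j + 1),
            ((-1 : ℤ) ^ p * ((p + (m - j + n)).choose (m - j + n))) • P (j - p) (p + (m - j + n)))
        - ((m - j + n).choose n) •
          (∑ p ∈ range (j + 1),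
            ((-1 : ℤ) ^ p * ((p + (m - j + n)).choose (m - j + n))) • Q (j - p) (p + (m - j + n))) := by
    intro j _
    rw [← smul_sub, ← Finset.sum_sub_distrib]
    congr 1
    apply Finset.sum_congr rfl; intro p _
    rw [← smul_sub]
  rw [Finset.sum_congr rfl key, Finset.sum_sub_distrib, SUBP, SUBQ]
  abel
end AbstractSums

-- ===== additive-map helpers =====
section HomHelpers
variable {A B : Type*} [AddCommGroup A] [AddCommGroup B]
  (f : A → ℕ → B) (hf : ∀ x y n, f (x + y) n = f x n + f y n)

private def toHom (d : ℕ) : A →+ B := AddMonoidHom.mk' (fun x => f x d) (fun a b => hf a b d)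

include hf in
private lemma hom_zero (d : ℕ) : f 0 d = 0 := (toHom f hf d).map_zero

include hf in
private lemma hom_neg (x : A) (d : ℕ) : f (-x) d = - f x d := (toHom f hf d).map_neg x

include hf in
private lemma hom_push {ι : Type*} (s : Finset ι) (z : ι → ℤ) (U V : ι → A) (d : ℕ) :
    f (∑ i ∈ s, z i • (U i - V i)) d = ∑ i ∈ s, z i • (f (U i) d - f (V i) d) := by
  have h0 : f (∑ i ∈ s, z i • (U i - V i)) d = (toHom f hf d) (∑ i ∈ s, z i • (U i - V i)) := rfl
  rw [h0, map_sum]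
  apply Finset.sum_congr rfl; intro i _
  rw [map_zsmul, map_sub]
  rfl
end HomHelpers

-- ===== sesquilinearity cores =====
section Sesqui
variable {M : Type*} [AddCommGroup M]

private lemma SQL (U V U' V' : ℕ → ℕ → M)
    (hU0 : ∀ β, U' 0 β = 0) (hU : ∀ α β, U' (α + 1) β = - U α β)
    (hV0 : ∀ β, V' 0 β = 0) (hV : ∀ α β, V' (α + 1) β = - V α β) (a b : ℕ) :
    ∑ p ∈ range (a + 1), ((-1 : ℤ) ^ p * ((p + b).choose b)) • (U' (a - p) (p + b) - V' (a - p) (p + b))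
      = - (if a = 0 then 0 else
          ∑ p ∈ range ((a - 1) + 1), ((-1 : ℤ) ^ p * ((p + b).choose b)) •
            (U (a - 1 - p) (p + b) - V (a - 1 - p) (p + b))) := by
  match a with
  | 0 =>
    rw [if_pos rfl]
    simp [hU0, hV0]
  | Nat.succ a' =>
    rw [if_neg (Nat.succ_ne_zero a')]
    rw [Finset.sum_range_succ]
    have hz : ((-1 : ℤ) ^ (a' + 1) * ((a' + 1 + b).choose b)) •
        (U' (a' + 1 - (a' + 1)) (a' + 1 + b) - V' (a' + 1 - (a' + 1)) (a' + 1 + b)) = 0 := by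
      have e : a' + 1 - (a' + 1) = 0 := by omega
      rw [e, hU0, hV0]
      simp
    rw [hz, add_zero]
    have e2 : a' + 1 - 1 = a' := by omega
    rw [e2, ← Finset.sum_neg_distrib]
    apply Finset.sum_congr rfl; intro p hp
    simp only [mem_range] at hp
    have e3 : a' + 1 - p = (a' - p) + 1 := by omega
    rw [e3, hU, hV]
    rw [← smul_neg]
    congr 1
    abel

private lemma SQR (U V U' V' : ℕ → ℕ → M)
    (hU0 : ∀ α, U' α 0 = 0) (hU : ∀ α β, U' α (β + 1) = - U α β)
    (hV0 : ∀ α, V' α 0 = 0) (hV : ∀ α β, V' α (β + 1) = - V α β) (a b : ℕ) :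
    ∑ p ∈ range (a + 1), ((-1 : ℤ) ^ p * ((p + b).choose b)) • (U' (a - p) (p + b) - V' (a - p) (p + b))
      = (if b = 0 then 0 else
          - ∑ p ∈ range (a + 1), ((-1 : ℤ) ^ p * ((p + (b - 1)).choose (b - 1))) •
              (U (a - p) (p + (b - 1)) - V (a - p) (p + (b - 1))))
        + (if a = 0 then 0 else
          ∑ p ∈ range ((a - 1) + 1), ((-1 : ℤ) ^ p * ((p + b).choose b)) •
              (U (a - 1 - p) (p + b) - V (a - 1 - p) (p + b))) := by
  match b with
  | 0 =>
    rw [if_pos rfl, zero_add]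
    have norm : ∀ (W : ℕ → ℕ → M) (c : ℕ), ∀ p ∈ range (c + 1),
        ((-1 : ℤ) ^ p * ((p + 0).choose 0)) • (W (c - p) (p + 0))
          = ((-1 : ℤ) ^ p) • (W (c - p) p) := by
      intro W c p _
      rw [Nat.add_zero, Nat.choose_zero_right, Nat.cast_one, mul_one]
    rw [Finset.sum_congr rfl (norm (fun i j => U' i j - V' i j) a)]
    rw [Finset.sum_range_succ']
    have hz : ((-1 : ℤ) ^ 0) • (U' (a - 0) 0 - V' (a - 0) 0) = 0 := by
      rw [hU0, hV0]; simp
    rw [hz, add_zero]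
    match a with
    | 0 => simp
    | Nat.succ a' =>
      rw [if_neg (Nat.succ_ne_zero a')]
      have e2 : a' + 1 - 1 = a' := by omega
      rw [e2]
      rw [Finset.sum_congr rfl (norm (fun i j => U i j - V i j) a')]
      apply Finset.sum_congr rfl; intro p hp
      simp only [mem_range] at hp
      have e3 : a' + 1 - (p + 1) = a' - p := by omega
      rw [e3, hU, hV, pow_succ]
      rw [show (-U (a' - p) p - -V (a' - p) p) = -(U (a' - p) p - V (a' - p) p) from by abel]
      rw [smul_neg, ← neg_smul]
      congr 1
      ring
  | Nat.succ b' =>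
    rw [if_neg (Nat.succ_ne_zero b')]
    have e0 : b' + 1 - 1 = b' := by omega
    rw [e0]
    have main : ∀ p ∈ range (a + 1),
        ((-1 : ℤ) ^ p * ((p + (b' + 1)).choose (b' + 1))) •
          (U' (a - p) (p + (b' + 1)) - V' (a - p) (p + (b' + 1)))
        = (- (((-1 : ℤ) ^ p * ((p + b').choose b')) • (U (a - p) (p + b') - V (a - p) (p + b'))))
          + (- (((-1 : ℤ) ^ p * ((p + b').choose (b' + 1))) •
              (U (a - p) (p + b') - V (a - p) (p + b')))) := by
      intro p _
      have e1 : p + (b' + 1) = (p + b') + 1 := by omega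
      rw [e1, hU, hV]
      have e2 : ((p + b' + 1).choose (b' + 1) : ℤ)
          = ((p + b').choose b' : ℤ) + ((p + b').choose (b' + 1) : ℤ) := by
        have h := Nat.choose_succ_succ (p + b') b'
        exact_mod_cast h
      rw [show (-U (a - p) (p + b') - -V (a - p) (p + b'))
          = -(U (a - p) (p + b') - V (a - p) (p + b')) from by abel]
      rw [smul_neg, e2]
      rw [mul_add, add_smul]
      abel
    rw [Finset.sum_congr rfl main, Finset.sum_add_distrib]
    congr 1
    · rw [Finset.sum_neg_distrib]
    · rw [Finset.sum_neg_distrib]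
      rw [Finset.sum_range_succ']
      have hz0 : ((-1 : ℤ) ^ 0 * ((0 + b').choose (b' + 1))) •
          (U (a - 0) (0 + b') - V (a - 0) (0 + b')) = 0 := by
        rw [Nat.choose_eq_zero_of_lt (show 0 + b' < b' + 1 by omega)]
        simp
      rw [hz0, add_zero]
      match a with
      | 0 => simp
      | Nat.succ a' =>
        rw [if_neg (Nat.succ_ne_zero a')]
        have e2 : a' + 1 - 1 = a' := by omega
        rw [e2, ← Finset.sum_neg_distrib]
        apply Finset.sum_congr rfl; intro p hp
        simp only [mem_range] at hp
        have e3 : a' + 1 - (p + 1) = a' - p := by omega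
        have e4 : (p + 1) + b' = p + (b' + 1) := by omega
        rw [e3, e4, pow_succ]
        rw [← neg_smul]
        congr 1
        ring
end Sesqui

-- ===== expansion lemmas =====
section Expand
variable {A0 A1 : Type*} [AddCommGroup A0] [AddCommGroup A1]

private lemma ExpA (F0 G0 : A0 → ℕ → A0) (F1 G1 : A1 → ℕ → A1) (h : A0 → ℕ → A1)
    (hF1 : ∀ x y n, F1 (x + y) n = F1 x n + F1 y n) (m n b : ℕ) (x : A0) :
    cbr01 F0 F1 (cbr01 G0 G1 h n) m x b
      = DD (fun a c e => F1 (G1 (h x e) c) a - F1 (h (G0 x c) e) a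
            - G1 (h (F0 x a) e) c + h (G0 (F0 x a) c) e) m n b := by
  simp only [cbr01, DD]
  apply Finset.sum_congr rfl; intro p _
  rw [hom_push F1 hF1]
  rw [← Finset.sum_sub_distrib, Finset.smul_sum]
  apply Finset.sum_congr rfl; intro q _
  rw [← smul_sub, smul_smul]
  congr 1
  · rw [pow_add]; ring
  · abel

private lemma ExpC (F0 G0 : A0 → ℕ → A0) (F1 G1 : A1 → ℕ → A1) (h : A0 → ℕ → A1)
    (hF1 : ∀ x y n, F1 (x + y) n = F1 x n + F1 y n) (m n b : ℕ) (x : A0) :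
    cbr01 F0 F1 (cbr10 h G0 G1 n) m x b
      = DD (fun a c e => F1 (h (G0 x e) c) a - F1 (G1 (h x c) e) a
            - h (G0 (F0 x a) e) c + G1 (h (F0 x a) c) e) m n b := by
  simp only [cbr01, cbr10, DD]
  apply Finset.sum_congr rfl; intro p _
  rw [hom_push F1 hF1]
  rw [← Finset.sum_sub_distrib, Finset.smul_sum]
  apply Finset.sum_congr rfl; intro q _
  rw [← smul_sub, smul_smul]
  congr 1
  · rw [pow_add]; ring
  · abel

private lemma ExpEF (F0 G0 : A0 → ℕ → A0) (F1 G1 : A1 → ℕ → A1) (h : A0 → ℕ → A1)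
    (hh : ∀ x y n, h (x + y) n = h x n + h y n) (m n b : ℕ) (x : A0) :
    cbr10 h (cbr F0 G0 n) (cbr F1 G1 n) m x b
      = DD (fun a c e => h (F0 (G0 x e) c) a - h (G0 (F0 x c) e) a
            - F1 (G1 (h x a) e) c + G1 (F1 (h x a) c) e) m n b := by
  simp only [cbr10, cbr, DD]
  apply Finset.sum_congr rfl; intro p _
  rw [hom_push h hh]
  rw [← Finset.sum_sub_distrib, Finset.smul_sum]
  apply Finset.sum_congr rfl; intro q _
  rw [← smul_sub, smul_smul]
  congr 1
  · rw [pow_add]; ring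
  · abel

private lemma ExpB (F0 G0 : A0 → ℕ → A0) (F1 G1 : A1 → ℕ → A1) (h : A0 → ℕ → A1)
    (hh : ∀ x y n, h (x + y) n = h x n + h y n) (m n b : ℕ) (x : A0) :
    (∑ j ∈ range (m + 1), ((m - j + n).choose n) •
        cbr01 (cbr F0 G0 j) (cbr F1 G1 j) h (m - j + n) x b)
      = TTs (fun a c e => F1 (G1 (h x e) c) a - G1 (F1 (h x e) a) c
            - h (F0 (G0 x c) a) e + h (G0 (F0 x a) c) e) m n b := by
  simp only [cbr01, cbr, TTs]
  apply Finset.sum_congr rfl; intro j _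
  rw [Finset.smul_sum]
  apply Finset.sum_congr rfl; intro p _
  rw [hom_push h hh]
  rw [← Finset.sum_sub_distrib, Finset.smul_sum, Finset.smul_sum]
  apply Finset.sum_congr rfl; intro q _
  rw [← smul_sub, smul_smul, ← natCast_zsmul, smul_smul]
  congr 1
  · rw [pow_add]; ring
  · abel

private lemma ExpD (F0 G0 : A0 → ℕ → A0) (F1 G1 : A1 → ℕ → A1) (h : A0 → ℕ → A1)
    (hG1 : ∀ x y n, G1 (x + y) n = G1 x n + G1 y n) (m n b : ℕ) (x : A0) :
    (∑ j ∈ range (m + 1), ((m - j + n).choose n) •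
        cbr10 (cbr01 F0 F1 h j) G0 G1 (m - j + n) x b)
      = TTs (fun a c e => F1 (h (G0 x e) c) a - h (F0 (G0 x e) a) c
            - G1 (F1 (h x c) a) e + G1 (h (F0 x a) c) e) m n b := by
  simp only [cbr01, cbr10, TTs]
  apply Finset.sum_congr rfl; intro j _
  rw [Finset.smul_sum]
  apply Finset.sum_congr rfl; intro p _
  rw [hom_push G1 hG1]
  rw [← Finset.sum_sub_distrib, Finset.smul_sum, Finset.smul_sum]
  apply Finset.sum_congr rfl; intro q _
  rw [← smul_sub, smul_smul, ← natCast_zsmul, smul_smul]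
  congr 1
  · rw [pow_add]; ring
  · abel

private lemma ExpG (F0 G0 : A0 → ℕ → A0) (F1 G1 : A1 → ℕ → A1) (h : A0 → ℕ → A1)
    (hG1 : ∀ x y n, G1 (x + y) n = G1 x n + G1 y n) (m n b : ℕ) (x : A0) :
    (∑ j ∈ range (m + 1), ((m - j + n).choose n) •
        cbr10 (cbr10 h F0 F1 j) G0 G1 (m - j + n) x b)
      = TTs (fun a c e => h (F0 (G0 x e) c) a - F1 (h (G0 x e) a) c
            - G1 (h (F0 x c) a) e + G1 (F1 (h x a) c) e) m n b := by
  simp only [cbr10, TTs]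
  apply Finset.sum_congr rfl; intro j _
  rw [Finset.smul_sum]
  apply Finset.sum_congr rfl; intro p _
  rw [hom_push G1 hG1]
  rw [← Finset.sum_sub_distrib, Finset.smul_sum, Finset.smul_sum]
  apply Finset.sum_congr rfl; intro q _
  rw [← smul_sub, smul_smul, ← natCast_zsmul, smul_smul]
  congr 1
  · rw [pow_add]; ring
  · abel

private lemma jac01 (F0 G0 : A0 → ℕ → A0) (F1 G1 : A1 → ℕ → A1) (h : A0 → ℕ → A1)
    (hF1 : ∀ x y n, F1 (x + y) n = F1 x n + F1 y n)
    (hG1 : ∀ x y n, G1 (x + y) n = G1 x n + G1 y n)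
    (hh : ∀ x y n, h (x + y) n = h x n + h y n) (m n b : ℕ) (x : A0) :
    cbr01 F0 F1 (cbr01 G0 G1 h n) m x b
      = (∑ j ∈ range (m + 1), ((m - j + n).choose n) •
          cbr01 (cbr F0 G0 j) (cbr F1 G1 j) h (m - j + n) x b)
        + cbr01 G0 G1 (cbr01 F0 F1 h m) n x b := by
  rw [ExpA F0 G0 F1 G1 h hF1 m n b x, ExpB F0 G0 F1 G1 h hh m n b x,
    ExpA G0 F0 G1 F1 h hG1 n m b x]
  exact JACcore
    (fun α β γ => F1 (G1 (h x γ) β) α) (fun α β γ => F1 (h (G0 x γ) β) α)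
    (fun α β γ => G1 (F1 (h x γ) β) α) (fun α β γ => G1 (h (F0 x γ) β) α)
    (fun α β γ => h (F0 (G0 x γ) β) α) (fun α β γ => h (G0 (F0 x γ) β) α) m n b

private lemma jac7 (F0 G0 : A0 → ℕ → A0) (F1 G1 : A1 → ℕ → A1) (h : A0 → ℕ → A1)
    (hF1 : ∀ x y n, F1 (x + y) n = F1 x n + F1 y n)
    (hG1 : ∀ x y n, G1 (x + y) n = G1 x n + G1 y n)
    (hh : ∀ x y n, h (x + y) n = h x n + h y n) (m n b : ℕ) (x : A0) :
    cbr01 F0 F1 (cbr10 h G0 G1 n) m x b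
      = (∑ j ∈ range (m + 1), ((m - j + n).choose n) •
          cbr10 (cbr01 F0 F1 h j) G0 G1 (m - j + n) x b)
        + cbr10 h (cbr F0 G0 m) (cbr F1 G1 m) n x b := by
  rw [ExpC F0 G0 F1 G1 h hF1 m n b x, ExpD F0 G0 F1 G1 h hG1 m n b x,
    ExpEF F0 G0 F1 G1 h hh n m b x]
  exact JACcore
    (fun α β γ => F1 (h (G0 x γ) β) α) (fun α β γ => F1 (G1 (h x γ) β) α)
    (fun α β γ => h (F0 (G0 x γ) β) α) (fun α β γ => h (G0 (F0 x γ) β) α)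
    (fun α β γ => G1 (F1 (h x γ) β) α) (fun α β γ => G1 (h (F0 x γ) β) α) m n b

private lemma jac8 (F0 G0 : A0 → ℕ → A0) (F1 G1 : A1 → ℕ → A1) (h : A0 → ℕ → A1)
    (hF1 : ∀ x y n, F1 (x + y) n = F1 x n + F1 y n)
    (hG1 : ∀ x y n, G1 (x + y) n = G1 x n + G1 y n)
    (hh : ∀ x y n, h (x + y) n = h x n + h y n) (m n b : ℕ) (x : A0) :
    cbr10 h (cbr F0 G0 n) (cbr F1 G1 n) m x b
      = (∑ j ∈ range (m + 1), ((m - j + n).choose n) •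
          cbr10 (cbr10 h F0 F1 j) G0 G1 (m - j + n) x b)
        + cbr01 F0 F1 (cbr10 h G0 G1 m) n x b := by
  rw [ExpEF F0 G0 F1 G1 h hh m n b x, ExpG F0 G0 F1 G1 h hG1 m n b x,
    ExpC F0 G0 F1 G1 h hF1 n m b x]
  exact JACcore
    (fun α β γ => h (F0 (G0 x γ) β) α) (fun α β γ => h (G0 (F0 x γ) β) α)
    (fun α β γ => F1 (h (G0 x γ) β) α) (fun α β γ => F1 (G1 (h x γ) β) α)
    (fun α β γ => G1 (h (F0 x γ) β) α) (fun α β γ => G1 (F1 (h x γ) β) α) m n b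

-- sesquilinearity bridges
private lemma Dch_eq {A B : Type*} [AddCommGroup B] (K : A → ℕ → B) (x : A) (b : ℕ) :
    Dch K x b = if b = 0 then 0 else - K x (b - 1) := by
  cases b with
  | zero => rfl
  | succ b' => simp [Dch]

private lemma sqlC (f0 : A0 → ℕ → A0) (f1 : A1 → ℕ → A1) (h : A0 → ℕ → A1)
    (hh : ∀ x y n, h (x + y) n = h x n + h y n) (n : ℕ) (x : A0) (b : ℕ) :
    cbr01 (Dch f0) (Dch f1) h n x b
      = - (if n = 0 then 0 else cbr01 f0 f1 h (n - 1) x b) := by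
  simp only [cbr01]
  exact SQL (fun α β => f1 (h x β) α) (fun α β => h (f0 x α) β)
    (fun α β => Dch f1 (h x β) α) (fun α β => h (Dch f0 x α) β)
    (fun β => rfl) (fun α β => rfl)
    (fun β => hom_zero h hh β) (fun α β => hom_neg h hh (f0 x α) β) n b

private lemma sql10 (f0 : A0 → ℕ → A0) (f1 : A1 → ℕ → A1) (h : A0 → ℕ → A1)
    (hf1 : ∀ x y n, f1 (x + y) n = f1 x n + f1 y n) (n : ℕ) (x : A0) (b : ℕ) :
    cbr10 (Dch h) f0 f1 n x b
      = - (if n = 0 then 0 else cbr10 h f0 f1 (n - 1) x b) := by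
  simp only [cbr10]
  exact SQL (fun α β => h (f0 x β) α) (fun α β => f1 (h x α) β)
    (fun α β => Dch h (f0 x β) α) (fun α β => f1 (Dch h x α) β)
    (fun β => rfl) (fun α β => rfl)
    (fun β => hom_zero f1 hf1 β) (fun α β => hom_neg f1 hf1 (h x α) β) n b

private lemma sqrC (f0 : A0 → ℕ → A0) (f1 : A1 → ℕ → A1) (h : A0 → ℕ → A1)
    (hf1 : ∀ x y n, f1 (x + y) n = f1 x n + f1 y n) (n : ℕ) (x : A0) (b : ℕ) :
    cbr01 f0 f1 (Dch h) n x b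
      = (if b = 0 then 0 else - cbr01 f0 f1 h n x (b - 1))
        + (if n = 0 then 0 else cbr01 f0 f1 h (n - 1) x b) := by
  simp only [cbr01]
  exact SQR (fun α β => f1 (h x β) α) (fun α β => h (f0 x α) β)
    (fun α β => f1 (Dch h x β) α) (fun α β => Dch h (f0 x α) β)
    (fun α => hom_zero f1 hf1 α) (fun α β => hom_neg f1 hf1 (h x β) α)
    (fun α => rfl) (fun α β => rfl) n b

private lemma sqr10 (f0 : A0 → ℕ → A0) (f1 : A1 → ℕ → A1) (h : A0 → ℕ → A1)
    (hh : ∀ x y n, h (x + y) n = h x n + h y n) (n : ℕ) (x : A0) (b : ℕ) :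
    cbr10 h (Dch f0) (Dch f1) n x b
      = (if b = 0 then 0 else - cbr10 h f0 f1 n x (b - 1))
        + (if n = 0 then 0 else cbr10 h f0 f1 (n - 1) x b) := by
  simp only [cbr10]
  exact SQR (fun α β => h (f0 x β) α) (fun α β => f1 (h x α) β)
    (fun α β => h (Dch f0 x β) α) (fun α β => Dch f1 (h x α) β)
    (fun α => hom_zero h hh α) (fun α β => hom_neg h hh (f0 x β) α)
    (fun α => rfl) (fun α β => rfl) n b

-- differential compatibility termwise lemmas
variable [Module ℂ A0] [Module ℂ A1]

private lemma c2a (f0 : A0 → ℕ → A0) (f1 : A1 → ℕ → A1) (h : A0 → ℕ → A1)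
    (dd : A1 →ₗ[ℂ] A0) (hc : ∀ v k, dd (f1 v k) = f0 (dd v) k) (n : ℕ) (y : A0) (b : ℕ) :
    dd (cbr01 f0 f1 h n y b) = cbr f0 (fun z k => dd (h z k)) n y b := by
  simp only [cbr01, cbr, map_sum, map_zsmul, map_sub]
  apply Finset.sum_congr rfl; intro p _
  rw [hc]

private lemma c2b (f0 : A0 → ℕ → A0) (f1 : A1 → ℕ → A1) (h : A0 → ℕ → A1)
    (dd : A1 →ₗ[ℂ] A0) (hc : ∀ v k, dd (f1 v k) = f0 (dd v) k) (n : ℕ) (z : A1) (b : ℕ) :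
    cbr01 f0 f1 h n (dd z) b = cbr f1 (fun z k => h (dd z) k) n z b := by
  simp only [cbr01, cbr]
  apply Finset.sum_congr rfl; intro p _
  rw [← hc]

private lemma c3a (f0 : A0 → ℕ → A0) (f1 : A1 → ℕ → A1) (h : A0 → ℕ → A1)
    (dd : A1 →ₗ[ℂ] A0) (hc : ∀ v k, dd (f1 v k) = f0 (dd v) k) (n : ℕ) (y : A0) (b : ℕ) :
    dd (cbr10 h f0 f1 n y b) = cbr (fun y k => dd (h y k)) f0 n y b := by
  simp only [cbr10, cbr, map_sum, map_zsmul, map_sub]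
  apply Finset.sum_congr rfl; intro p _
  rw [hc]

private lemma c3b (f0 : A0 → ℕ → A0) (f1 : A1 → ℕ → A1) (h : A0 → ℕ → A1)
    (dd : A1 →ₗ[ℂ] A0) (hc : ∀ v k, dd (f1 v k) = f0 (dd v) k) (n : ℕ) (z : A1) (b : ℕ) :
    cbr10 h f0 f1 n (dd z) b = cbr (fun z k => h (dd z) k) f1 n z b := by
  simp only [cbr10, cbr]
  apply Finset.sum_congr rfl; intro p _
  rw [← hc]

private lemma G0_ext {u v : G0T A0 A1} (h1 : ∀ x b, u.1.1 x b = v.1.1 x b)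
    (h2 : ∀ x b, u.1.2 x b = v.1.2 x b) (h3 : u.2 = v.2) : u = v := by
  obtain ⟨⟨a1, a2⟩, a3⟩ := u; obtain ⟨⟨b1, b2⟩, b3⟩ := v
  simp only at h1 h2 h3
  cases (funext fun x => funext fun k => h1 x k : a1 = b1)
  cases (funext fun x => funext fun k => h2 x k : a2 = b2)
  cases h3
  rfl

private lemma G1_ext {u v : G1T A0 A1} (h1 : ∀ x b, u.1 x b = v.1 x b) (h3 : u.2 = v.2) :
    u = v := by
  obtain ⟨a1, a3⟩ := u; obtain ⟨b1, b3⟩ := v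
  simp only at h1 h3
  cases (funext fun x => funext fun k => h1 x k : a1 = b1)
  cases h3
  rfl

-- projections of `- (if _ then 0 else Y)` and `X + (if _ then 0 else Y)`
private lemma p0ff (c : Prop) [Decidable c] (Y : G0T A0 A1) (x : A0) (b : ℕ) :
    (-(if c then (0 : G0T A0 A1) else Y)).1.1 x b = -(if c then 0 else Y.1.1 x b) := by
  split_ifs <;> simp

private lemma p0fs (c : Prop) [Decidable c] (Y : G0T A0 A1) (x : A1) (b : ℕ) :
    (-(if c then (0 : G0T A0 A1) else Y)).1.2 x b = -(if c then 0 else Y.1.2 x b) := by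
  split_ifs <;> simp

private lemma p0s (c : Prop) [Decidable c] (Y : G0T A0 A1) :
    (-(if c then (0 : G0T A0 A1) else Y)).2 = -(if c then 0 else Y.2) := by
  split_ifs <;> simp

private lemma p1f (c : Prop) [Decidable c] (Y : G1T A0 A1) (x : A0) (b : ℕ) :
    (-(if c then (0 : G1T A0 A1) else Y)).1 x b = -(if c then 0 else Y.1 x b) := by
  split_ifs <;> simp

private lemma p1s (c : Prop) [Decidable c] (Y : G1T A0 A1) :
    (-(if c then (0 : G1T A0 A1) else Y)).2 = -(if c then 0 else Y.2) := by
  split_ifs <;> simp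

private lemma q0ff (c : Prop) [Decidable c] (X Y : G0T A0 A1) (x : A0) (b : ℕ) :
    (X + (if c then (0 : G0T A0 A1) else Y)).1.1 x b
      = X.1.1 x b + (if c then 0 else Y.1.1 x b) := by
  split_ifs <;> simp

private lemma q0fs (c : Prop) [Decidable c] (X Y : G0T A0 A1) (x : A1) (b : ℕ) :
    (X + (if c then (0 : G0T A0 A1) else Y)).1.2 x b
      = X.1.2 x b + (if c then 0 else Y.1.2 x b) := by
  split_ifs <;> simp

private lemma q0s (c : Prop) [Decidable c] (X Y : G0T A0 A1) :
    (X + (if c then (0 : G0T A0 A1) else Y)).2 = X.2 + (if c then 0 else Y.2) := by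
  split_ifs <;> simp

private lemma q1f (c : Prop) [Decidable c] (X Y : G1T A0 A1) (x : A0) (b : ℕ) :
    (X + (if c then (0 : G1T A0 A1) else Y)).1 x b
      = X.1 x b + (if c then 0 else Y.1 x b) := by
  split_ifs <;> simp

private lemma q1s (c : Prop) [Decidable c] (X Y : G1T A0 A1) :
    (X + (if c then (0 : G1T A0 A1) else Y)).2 = X.2 + (if c then 0 else Y.2) := by
  split_ifs <;> simp

private lemma substSum0_ff (F : ℕ → ℕ → G0T A0 A1) (m n : ℕ) (x : A0) (b : ℕ) :
    (substSum F m n).1.1 x b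
      = ∑ j ∈ range (m + 1), ((m - j + n).choose n) • ((F j (m - j + n)).1.1 x b) := by
  simp only [substSum, Prod.fst_sum, Prod.smul_fst, Finset.sum_apply, Pi.smul_apply]

private lemma substSum0_fs (F : ℕ → ℕ → G0T A0 A1) (m n : ℕ) (x : A1) (b : ℕ) :
    (substSum F m n).1.2 x b
      = ∑ j ∈ range (m + 1), ((m - j + n).choose n) • ((F j (m - j + n)).1.2 x b) := by
  simp only [substSum, Prod.fst_sum, Prod.snd_sum, Prod.smul_fst, Prod.smul_snd,
    Finset.sum_apply, Pi.smul_apply]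

private lemma substSum0_s (F : ℕ → ℕ → G0T A0 A1) (m n : ℕ) :
    (substSum F m n).2
      = ∑ j ∈ range (m + 1), ((m - j + n).choose n) • ((F j (m - j + n)).2) := by
  simp only [substSum, Prod.snd_sum, Prod.smul_snd]

private lemma substSum1_f (F : ℕ → ℕ → G1T A0 A1) (m n : ℕ) (x : A0) (b : ℕ) :
    (substSum F m n).1 x b
      = ∑ j ∈ range (m + 1), ((m - j + n).choose n) • ((F j (m - j + n)).1 x b) := by
  simp only [substSum, Prod.fst_sum, Prod.smul_fst, Finset.sum_apply, Pi.smul_apply]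

private lemma substSum1_s (F : ℕ → ℕ → G1T A0 A1) (m n : ℕ) :
    (substSum F m n).2
      = ∑ j ∈ range (m + 1), ((m - j + n).choose n) • ((F j (m - j + n)).2) := by
  simp only [substSum, Prod.snd_sum, Prod.smul_snd]
end Expand
end AuxComb

/-- For a `2`-term complex `A₁ →d A₀` of finite `ℂ[∂]`-modules, the data
`(𝒢₁ = CEnd¹(A) ⊕ A₁ → 𝒢₀ = CEnd⁰(A) ⊕ A₀, ρ₂, ρ₃ = 0)` with differential `Δ + d` and
the brackets `rr00`, `rr01`, `rr10` is a strict `2`-term `Leib_∞`-conformal algebra: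
it satisfies conditions (i)–(ix) of the definition (condition (ix) being trivial
since `ρ₃ = 0`). -/
theorem stmt19 {A0 A1 : Type*} [AddCommGroup A0] [Module ℂ A0] [AddCommGroup A1] [Module ℂ A1]
    (D0 : A0 →ₗ[ℂ] A0) (D1 : A1 →ₗ[ℂ] A1)
    (hfin0 : FinPart D0) (hfin1 : FinPart D1)
    (dd : A1 →ₗ[ℂ] A0) (hddD : ∀ v, dd (D1 v) = D0 (dd v)) :
    -- the differential is `ℂ[∂]`-linear
    (∀ w : G1T A0 A1, dG dd (DG1 D1 w) = DG0 D0 (dG dd w)) ∧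
    -- conformal sesquilinearity of `ρ₂`
    (∀ u v : G0T A0 A1, IsC0 D0 D1 dd u.1 → IsC0 D0 D1 dd v.1 → ∀ n,
      rr00 (DG0 D0 u) v n = - (if n = 0 then 0 else rr00 u v (n - 1)) ∧
      rr00 u (DG0 D0 v) n
        = DG0 D0 (rr00 u v n) + (if n = 0 then 0 else rr00 u v (n - 1))) ∧
    (∀ (u : G0T A0 A1) (w : G1T A0 A1), IsC0 D0 D1 dd u.1 → IsC1 D0 D1 w.1 → ∀ n,
      rr01 (DG0 D0 u) w n = - (if n = 0 then 0 else rr01 u w (n - 1)) ∧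
      rr01 u (DG1 D1 w) n
        = DG1 D1 (rr01 u w n) + (if n = 0 then 0 else rr01 u w (n - 1))) ∧
    (∀ (w : G1T A0 A1) (u : G0T A0 A1), IsC1 D0 D1 w.1 → IsC0 D0 D1 dd u.1 → ∀ n,
      rr10 (DG1 D1 w) u n = - (if n = 0 then 0 else rr10 w u (n - 1)) ∧
      rr10 w (DG0 D0 u) n
        = DG1 D1 (rr10 w u n) + (if n = 0 then 0 else rr10 w u (n - 1))) ∧
    -- condition (ii)
    (∀ (u : G0T A0 A1) (w : G1T A0 A1), IsC0 D0 D1 dd u.1 → IsC1 D0 D1 w.1 → ∀ n,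
      dG dd (rr01 u w n) = rr00 u (dG dd w) n) ∧
    -- condition (iii)
    (∀ (w : G1T A0 A1) (u : G0T A0 A1), IsC1 D0 D1 w.1 → IsC0 D0 D1 dd u.1 → ∀ n,
      dG dd (rr10 w u n) = rr00 (dG dd w) u n) ∧
    -- condition (iv)
    (∀ w w' : G1T A0 A1, IsC1 D0 D1 w.1 → IsC1 D0 D1 w'.1 → ∀ n,
      rr01 (dG dd w) w' n = rr10 w (dG dd w') n) ∧
    -- condition (v) with ρ₃ = 0
    (∀ u v t : G0T A0 A1, IsC0 D0 D1 dd u.1 → IsC0 D0 D1 dd v.1 → IsC0 D0 D1 dd t.1 →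
      ∀ m n, rr00 u (rr00 v t n) m
        = substSum (fun j s => rr00 (rr00 u v j) t s) m n + rr00 v (rr00 u t m) n) ∧
    -- condition (vi) with ρ₃ = 0
    (∀ (u v : G0T A0 A1) (w : G1T A0 A1),
      IsC0 D0 D1 dd u.1 → IsC0 D0 D1 dd v.1 → IsC1 D0 D1 w.1 →
      ∀ m n, rr01 u (rr01 v w n) m
        = substSum (fun j s => rr01 (rr00 u v j) w s) m n + rr01 v (rr01 u w m) n) ∧
    -- condition (vii) with ρ₃ = 0
    (∀ (u : G0T A0 A1) (w : G1T A0 A1) (v : G0T A0 A1),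
      IsC0 D0 D1 dd u.1 → IsC1 D0 D1 w.1 → IsC0 D0 D1 dd v.1 →
      ∀ m n, rr01 u (rr10 w v n) m
        = substSum (fun j s => rr10 (rr01 u w j) v s) m n + rr10 w (rr00 u v m) n) ∧
    -- condition (viii) with ρ₃ = 0
    (∀ (w : G1T A0 A1) (u v : G0T A0 A1),
      IsC1 D0 D1 w.1 → IsC0 D0 D1 dd u.1 → IsC0 D0 D1 dd v.1 →
      ∀ m n, rr10 w (rr00 u v n) m
        = substSum (fun j s => rr10 (rr10 w u j) v s) m n + rr01 u (rr10 w v m) n) := by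
  constructor
  · -- differential is ℂ[∂]-linear
    intro w
    simp only [dG, DG0, DG1]
    refine G0_ext ?_ ?_ ?_
    · intro y k
      cases k with
      | zero => simp [Dch]
      | succ k' => simp [Dch]
    · intro z k
      cases k <;> rfl
    · exact hddD w.2
  refine ⟨?_, ?_, ?_, ?_, ?_, ?_, ?_, ?_, ?_, ?_⟩
  · -- sesquilinearity for rr00
    intro u v hu hv n
    constructor
    · refine G0_ext ?_ ?_ ?_
      · intro x b
        rw [p0ff]
        simp only [rr00, DG0]
        exact sqlC u.1.1 u.1.1 v.1.1 hv.1.1 n x b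
      · intro x b
        rw [p0fs]
        simp only [rr00, DG0]
        exact sqlC u.1.2 u.1.2 v.1.2 hv.2.1.1 n x b
      · rw [p0s]
        show Dch u.1.1 v.2 n = _
        rw [Dch_eq]
        split_ifs <;> simp [rr00]
    · refine G0_ext ?_ ?_ ?_
      · intro x b
        rw [q0ff]
        simp only [rr00, DG0]
        rw [Dch_eq]
        exact sqrC u.1.1 u.1.1 v.1.1 hu.1.1 n x b
      · intro x b
        rw [q0fs]
        simp only [rr00, DG0]
        rw [Dch_eq]
        exact sqrC u.1.2 u.1.2 v.1.2 hu.2.1.1 n x b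
      · rw [q0s]
        show u.1.1 (D0 v.2) n = _
        rw [hu.1.2.2.1 v.2 n]
        rfl
  · -- sesquilinearity for rr01
    intro u w hu hw n
    constructor
    · refine G1_ext ?_ ?_
      · intro x b
        rw [p1f]
        simp only [rr01, DG0]
        exact sqlC u.1.1 u.1.2 w.1 hw.1 n x b
      · rw [p1s]
        show Dch u.1.2 w.2 n = _
        rw [Dch_eq]
        split_ifs <;> simp [rr01]
    · refine G1_ext ?_ ?_
      · intro x b
        rw [q1f]
        simp only [rr01, DG1]
        rw [Dch_eq]
        exact sqrC u.1.1 u.1.2 w.1 hu.2.1.1 n x b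
      · rw [q1s]
        show u.1.2 (D1 w.2) n = _
        rw [hu.2.1.2.2.1 w.2 n]
        rfl
  · -- sesquilinearity for rr10
    intro w u hw hu n
    constructor
    · refine G1_ext ?_ ?_
      · intro x b
        rw [p1f]
        simp only [rr10, DG1]
        exact sql10 u.1.1 u.1.2 w.1 hu.2.1.1 n x b
      · rw [p1s]
        show Dch w.1 u.2 n = _
        rw [Dch_eq]
        split_ifs <;> simp [rr10]
    · refine G1_ext ?_ ?_
      · intro x b
        rw [q1f]
        simp only [rr10, DG0, DG1]
        rw [Dch_eq]
        exact sqr10 u.1.1 u.1.2 w.1 hw.1 n x b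
      · rw [q1s]
        show w.1 (D0 u.2) n = _
        rw [hw.2.2.1 u.2 n]
        rfl
  · -- condition (ii)
    intro u w hu hw n
    refine G0_ext ?_ ?_ ?_
    · intro y b
      exact c2a u.1.1 u.1.2 w.1 dd hu.2.2 n y b
    · intro z b
      exact c2b u.1.1 u.1.2 w.1 dd hu.2.2 n z b
    · exact hu.2.2 w.2 n
  · -- condition (iii)
    intro w u hw hu n
    refine G0_ext ?_ ?_ ?_
    · intro y b
      exact c3a u.1.1 u.1.2 w.1 dd hu.2.2 n y b
    · intro z b
      exact c3b u.1.1 u.1.2 w.1 dd hu.2.2 n z b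
    · rfl
  · -- condition (iv)
    intro w w' _ _ n
    rfl
  · -- condition (v)
    intro u v t hu hv ht m n
    refine G0_ext ?_ ?_ ?_
    · intro x b
      simp only [rr00, Prod.fst_add, Prod.snd_add, Pi.add_apply]
      rw [substSum0_ff]
      simp only [rr00]
      exact jac01 u.1.1 v.1.1 u.1.1 v.1.1 t.1.1 hu.1.1 hv.1.1 ht.1.1 m n b x
    · intro x b
      simp only [rr00, Prod.fst_add, Prod.snd_add, Pi.add_apply]
      rw [substSum0_fs]
      simp only [rr00]
      exact jac01 u.1.2 v.1.2 u.1.2 v.1.2 t.1.2 hu.2.1.1 hv.2.1.1 ht.2.1.1 m n b x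
    · simp only [rr00, Prod.snd_add]
      rw [substSum0_s]
      simp only [rr00]
      exact genA (fun a c => u.1.1 (v.1.1 t.2 c) a) (fun a c => v.1.1 (u.1.1 t.2 a) c) m n
  · -- condition (vi)
    intro u v w hu hv hw m n
    refine G1_ext ?_ ?_
    · intro x b
      simp only [rr01, rr00, Prod.fst_add, Prod.snd_add, Pi.add_apply]
      rw [substSum1_f]
      simp only [rr01, rr00]
      exact jac01 u.1.1 v.1.1 u.1.2 v.1.2 w.1 hu.2.1.1 hv.2.1.1 hw.1 m n b x
    · simp only [rr01, rr00, Prod.snd_add]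
      rw [substSum1_s]
      simp only [rr01, rr00]
      exact genA (fun a c => u.1.2 (v.1.2 w.2 c) a) (fun a c => v.1.2 (u.1.2 w.2 a) c) m n
  · -- condition (vii)
    intro u w v hu hw hv m n
    refine G1_ext ?_ ?_
    · intro x b
      simp only [rr01, rr10, rr00, Prod.fst_add, Prod.snd_add, Pi.add_apply]
      rw [substSum1_f]
      simp only [rr01, rr10, rr00]
      exact jac7 u.1.1 v.1.1 u.1.2 v.1.2 w.1 hu.2.1.1 hv.2.1.1 hw.1 m n b x
    · simp only [rr01, rr10, rr00, Prod.snd_add]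
      rw [substSum1_s]
      simp only [rr01, rr10, rr00]
      exact genA (fun a c => u.1.2 (w.1 v.2 c) a) (fun a c => w.1 (u.1.1 v.2 a) c) m n
  · -- condition (viii)
    intro w u v hw hu hv m n
    refine G1_ext ?_ ?_
    · intro x b
      simp only [rr01, rr10, rr00, Prod.fst_add, Prod.snd_add, Pi.add_apply]
      rw [substSum1_f]
      simp only [rr01, rr10, rr00]
      exact jac8 u.1.1 v.1.1 u.1.2 v.1.2 w.1 hu.2.1.1 hv.2.1.1 hw.1 m n b x
    · simp only [rr01, rr10, rr00, Prod.snd_add]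
      rw [substSum1_s]
      simp only [rr01, rr10, rr00]
      exact genA (fun a c => w.1 (u.1.1 v.2 c) a) (fun a c => u.1.2 (w.1 v.2 a) c) m n

end CE
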